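/- Let M be a laminar matroid and e an element of its ground set. Then M / e (the contraction of e) is a laminar matroid. -/

import Mathlib

open Set Matroid

variable {α : Type*}

/-- A circuit: a minimal dependent set. -/
def Matroid.IsCircuit' (M : Matroid α) (C : Set α) : Prop :=
  M.Dep C ∧ ∀ D, D ⊂ C → M.Indep D

/-- The circuit characterization of laminar matroids. -/
def Matroid.IsLaminar (M : Matroid α) : Prop :=
  ∀ C₁ C₂, M.IsCircuit' C₁ → M.IsCircuit' C₂ → (C₁ ∩ C₂).Nonempty →
    M.closure C₁ ⊆ M.closure C₂ ∨ M.closure C₂ ⊆ M.closure C₁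

/-- A laminar family: any two intersecting members are comparable. -/
def IsLaminarFamily (𝒜 : Set (Set α)) : Prop :=
  ∀ A ∈ 𝒜, ∀ B ∈ 𝒜, (A ∩ B).Nonempty → A ⊆ B ∨ B ⊆ A

/-- `M` is presented by the laminar family `𝒜` with capacities `c`. -/
def Matroid.IsLaminarPresBy (M : Matroid α) (E : Set α) (𝒜 : Set (Set α)) (c : Set α → ℕ) :
    Prop :=
  M.E = E ∧ ∀ I, M.Indep I ↔ I ⊆ E ∧ ∀ A ∈ 𝒜, (I ∩ A).ncard ≤ c A

/-- `M` has some laminar presentation (on its own ground set); this captures being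
isomorphic to a laminar matroid `M(E, 𝒜, c)`. -/
def Matroid.HasLaminarPres (M : Matroid α) : Prop :=
  ∃ (𝒜 : Set (Set α)) (c : Set α → ℕ), IsLaminarFamily 𝒜 ∧ (∀ A ∈ 𝒜, A ⊆ M.E) ∧
    M.IsLaminarPresBy M.E 𝒜 c

/-- Deletion of a set of elements. -/
def Matroid.del (M : Matroid α) (X : Set α) : Matroid α := M ↾ (M.E \ X)

/-- Contraction of a set of elements, defined via duality. -/
def Matroid.con (M : Matroid α) (X : Set α) : Matroid α := (M✶ ↾ (M.E \ X))✶

/-- `IsMinor M N` means `N` is obtained from `M` by a sequence of single-element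
deletions and contractions. -/
inductive IsMinor : Matroid α → Matroid α → Prop
  | refl (M : Matroid α) : IsMinor M M
  | del (M N : Matroid α) (e : α) : IsMinor M N → IsMinor M (N.del {e})
  | con (M N : Matroid α) (e : α) : IsMinor M N → IsMinor M (N.con {e})

/-! A circuit `C` of `M ／ K` sits between `C` and `C ∪ K` for some circuit `C'` of `M`, so its
closure in `M ／ K` is `cl_M (C' ∪ K) \ K`. Comparable closures of circuits of `M` stay
comparable after adding `K` and removing it again. -/

namespace Matroid

variable {M : Matroid α} {C K X Y : Set α}

lemma con_eq_contract (M : Matroid α) (X : Set α) : M.con X = M ／ X := rfl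

lemma isCircuit'_iff : M.IsCircuit' C ↔ M.IsCircuit C :=
  isCircuit_iff_forall_ssubset.symm

lemma closure_union_subset_closure_union (h : M.closure X ⊆ M.closure Y) (Z : Set α) :
    M.closure (X ∪ Z) ⊆ M.closure (Y ∪ Z) := by
  rw [← closure_union_closure_left_eq, ← M.closure_union_closure_left_eq Y]
  exact M.closure_subset_closure (union_subset_union_left _ h)

lemma IsCircuit.exists_isCircuit_contract_closure_eq (hC : (M ／ K).IsCircuit C) :
    ∃ C', M.IsCircuit C' ∧ C ⊆ C' ∧ (M ／ K).closure C = M.closure (C' ∪ K) \ K := by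
  obtain ⟨C', hC', hCC', hC'CK⟩ := hC.exists_subset_isCircuit_of_contract
  have hunion : C' ∪ K = C ∪ K :=
    subset_antisymm (union_subset hC'CK subset_union_right) (union_subset_union_left _ hCC')
  exact ⟨C', hC', hCC', by rw [contract_closure_eq, hunion]⟩

theorem IsLaminar.contract (hM : M.IsLaminar) (K : Set α) : (M ／ K).IsLaminar := by
  intro C₁ C₂ h₁ h₂ hC₁C₂
  obtain ⟨C₁', hC₁', hC₁C₁', hcl₁⟩ :=
    (isCircuit'_iff.1 h₁).exists_isCircuit_contract_closure_eq
  obtain ⟨C₂', hC₂', hC₂C₂', hcl₂⟩ :=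
    (isCircuit'_iff.1 h₂).exists_isCircuit_contract_closure_eq
  rw [hcl₁, hcl₂]
  rcases hM C₁' C₂' (isCircuit'_iff.2 hC₁') (isCircuit'_iff.2 hC₂')
    (hC₁C₂.mono (inter_subset_inter hC₁C₁' hC₂C₂')) with h | h
  · exact .inl (sdiff_subset_sdiff_left (closure_union_subset_closure_union h K))
  · exact .inr (sdiff_subset_sdiff_left (closure_union_subset_closure_union h K))

end Matroid

theorem stmt_10_general (M : Matroid α) (hM : M.IsLaminar)
    (e : α) : (M.con {e}).IsLaminar := by
  rw [con_eq_contract]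
  exact hM.contract {e}

theorem stmt_10 (M : Matroid α) (hfin : M.E.Finite) (hM : M.IsLaminar)
    (e : α) (he : e ∈ M.E) : (M.con {e}).IsLaminar :=
  stmt_10_general M hM e
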